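/- Let d ≥ 2, let K be a number field, and let S be the set of primes of K dividing (2d−2)!, together with all archimedean places. For a ∈ K̄^×, let f_a(x) = a·x(x−1)(x−2)⋯(x−d+1) / ((x+1)(x+2)⋯(x+d−1)), a degree-d rational map, and let X = {0,1,2,…,d−1} ∪ {−1,−2,…,−(d−1)} ∪ {∞} ⊂ P^1, a set of 2d points. Then for all a ∈ R_S^×, the triple (f_a, X, X) lies in GR_d^1[2d](K,S); in particular f_a has simple good reduction outside S, f_a(X) = {0,∞} ⊂ X, X has good reduction outside S, and ∑_{P∈X} e_{f_a}(P) = 2d (so every point of X is unramified for f_a). -/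

import Mathlib

open Polynomial
open scoped Classical

noncomputable section

/-- The projective line over `L`: `L` together with a point at infinity (`none`). -/
abbrev ProjLine (L : Type*) := Option L

namespace ProjLine

variable {L : Type*} [Field L]

/-- Value of the rational map `p/q` at a finite point `x`. -/
def evalAt (p q : L[X]) (x : L) : ProjLine L :=
  if q.eval x = 0 then none else some (p.eval x / q.eval x)

/-- Value at a point of the projective line of the degree-`d` morphism whose
dehomogenized description is the pair `(p, q)` (i.e. the morphism
`[Y^d·p(X/Y) : Y^d·q(X/Y)]` in homogeneous coordinates). -/
def eval (d : ℕ) (p q : L[X]) : ProjLine L → ProjLine L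
  | some x => evalAt p q x
  | none => evalAt (p.reflect d) (q.reflect d) 0

/-- Ramification index of `p/q` at a finite point `x`. -/
def ramAt (p q : L[X]) (x : L) : ℕ :=
  if q.eval x = 0 then rootMultiplicity x q
  else rootMultiplicity x (C (q.eval x) * p - C (p.eval x) * q)

/-- Ramification index at a point of the projective line of the degree-`d` morphism
with dehomogenized description `(p, q)`. -/
def ram (d : ℕ) (p q : L[X]) : ProjLine L → ℕ
  | some x => ramAt p q x
  | none => ramAt (p.reflect d) (q.reflect d) 0

/-- The Möbius transformation of the projective line attached to a 2×2 matrix. -/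
def mobius (M : Matrix (Fin 2) (Fin 2) L) : ProjLine L → ProjLine L
  | some x => if M 1 0 * x + M 1 1 = 0 then none
      else some ((M 0 0 * x + M 0 1) / (M 1 0 * x + M 1 1))
  | none => if M 1 0 = 0 then none else some (M 0 0 / M 1 0)

/-- The Sylvester matrix of the binary forms of degrees `d` and `e` whose
dehomogenizations are `p` and `q`. -/
def sylvester (d e : ℕ) (p q : L[X]) : Matrix (Fin (e + d)) (Fin (e + d)) L :=
  Matrix.of fun i j =>
    if (i : ℕ) < e then
      (if (i : ℕ) ≤ (j : ℕ) ∧ (j : ℕ) ≤ (i : ℕ) + d then p.coeff (d + (i : ℕ) - (j : ℕ)) else 0)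
    else
      (if (i : ℕ) - e ≤ (j : ℕ) ∧ (j : ℕ) ≤ ((i : ℕ) - e) + e then
        q.coeff (e + ((i : ℕ) - e) - (j : ℕ)) else 0)

/-- The resultant of the binary forms of degrees `d` and `e` whose dehomogenizations
are `p` and `q`, as a Sylvester determinant. -/
def resultant (d e : ℕ) (p q : L[X]) : L := (sylvester d e p q).det

/-- Reduction of a point of the projective line over `L` modulo (the maximal ideal of)
a valuation subring `O` of `L`. -/
def red (O : ValuationSubring L) : ProjLine L → ProjLine (IsLocalRing.ResidueField ↥O)
  | some x => if h : x ∈ O then some (IsLocalRing.residue ↥O ⟨x, h⟩) else none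
  | none => none

end ProjLine

/-- A pair of polynomials `(p, q)` over a field is the (dehomogenized) description of a
morphism `P¹ → P¹` of degree `d`:  `p` and `q` are coprime, have degree at most `d`,
and at least one of them has degree exactly `d`. -/
def IsRatMapOfDeg {F : Type*} [Field F] (d : ℕ) (p q : F[X]) : Prop :=
  IsCoprime p q ∧ p.natDegree ≤ d ∧ q.natDegree ≤ d ∧ (p.natDegree = d ∨ q.natDegree = d)

open IsDedekindDomain NumberField

/-- The finite places of a number field `K`, i.e. the nonzero primes of its ring of
integers.  (Archimedean places impose no good-reduction conditions, so a finite set `S`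
of places containing all archimedean ones is modelled by its finite set of
nonarchimedean members.) -/
abbrev NFPlace (K : Type*) [Field K] [NumberField K] := HeightOneSpectrum (𝓞 K)

variable {K : Type*} [Field K] [NumberField K]

/-- `x ∈ R_S`: `x` is integral at every place outside `S`. -/
def SInteger (S : Set (NFPlace K)) (x : K) : Prop :=
  ∀ v : NFPlace K, v ∉ S → v.valuation K x ≤ 1

/-- `x ∈ R_S^×`: `x` is a unit at every place outside `S`. -/
def SUnit (S : Set (NFPlace K)) (x : K) : Prop :=
  x ≠ 0 ∧ ∀ v : NFPlace K, v ∉ S → v.valuation K x = 1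

section Ext

variable {Kb : Type*} [Field Kb] [Algebra K Kb]

/-- A valuation subring `O` of an extension `Kb` of `K` lies over the place `v` of `K`
if its restriction to `K` is exactly the valuation ring of `v`. -/
def LiesOver (O : ValuationSubring Kb) (v : NFPlace K) : Prop :=
  ∀ x : K, algebraMap K Kb x ∈ O ↔ v.valuation K x ≤ 1

/-- A set `X` of points of the projective line over an extension of `K` has good
reduction outside `S` if for every place `v ∉ S` and every extension of `v`
(i.e. every valuation subring lying over `v`), reduction is injective on `X`. -/
def GoodRedPoints (S : Set (NFPlace K)) (X : Set (ProjLine Kb)) : Prop :=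
  ∀ v : NFPlace K, v ∉ S → ∀ O : ValuationSubring Kb, LiesOver O v →
    Set.InjOn (ProjLine.red O) X

/-- `X` is stable under the action of `Gal(Kb/K)`. -/
def GalInvariant (X : Set (ProjLine Kb)) : Prop :=
  ∀ σ : Kb ≃ₐ[K] Kb, ∀ P ∈ X, Option.map (⇑σ) P ∈ X

end Ext

variable (K) in
/-- A triple `(f, Y, X)` consisting of (the dehomogenized description of) a rational
map and two sets of points of `P¹(K̄)`. -/
structure DynTriple where
  p : K[X]
  q : K[X]
  Y : Set (ProjLine (AlgebraicClosure K))
  X : Set (ProjLine (AlgebraicClosure K))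

/-- Base change of a polynomial over `K` to the algebraic closure. -/
def polyBar (p : K[X]) : (AlgebraicClosure K)[X] := p.map (algebraMap K (AlgebraicClosure K))

/-- Base change of a matrix over `K` to the algebraic closure. -/
def matBar (M : Matrix (Fin 2) (Fin 2) K) : Matrix (Fin 2) (Fin 2) (AlgebraicClosure K) :=
  M.map (algebraMap K (AlgebraicClosure K))

/-- `f` (given by the pair `(p,q)` of degree `d`) has simple good reduction outside `S`:
some `PGL₂(K)`-conjugate of `f` is given by a pair of `S`-integral polynomials whose
resultant is an `S`-unit. -/
def SimpleGoodRed (S : Set (NFPlace K)) (d : ℕ) (p q : K[X]) : Prop :=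
  ∃ (M : Matrix (Fin 2) (Fin 2) K) (p' q' : K[X]),
    M.det ≠ 0 ∧
    IsRatMapOfDeg d p' q' ∧
    (∀ n, SInteger S (p'.coeff n)) ∧ (∀ n, SInteger S (q'.coeff n)) ∧
    SUnit S (ProjLine.resultant d d p' q') ∧
    ∀ P : ProjLine K,
      ProjLine.mobius M (ProjLine.eval d p' q' P)
        = ProjLine.eval d p q (ProjLine.mobius M P)

/-- Membership in `𝐺𝑅̃¹_d[n](K,S)`:  `(f, Y, X)` with `f` of degree `d`, `X = Y ∪ f(Y)`
finite and Galois invariant, total ramification weight `n` on `Y`, and `X` of good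
reduction outside `S`.  (No good-reduction requirement on `f` itself.) -/
def MemGRtilde (S : Set (NFPlace K)) (d n : ℕ) (t : DynTriple K) : Prop :=
  IsRatMapOfDeg d t.p t.q ∧
  t.Y.Finite ∧
  t.X = t.Y ∪ (ProjLine.eval d (polyBar t.p) (polyBar t.q) '' t.Y) ∧
  GalInvariant (K := K) t.X ∧
  (∑ᶠ P ∈ t.Y, ProjLine.ram d (polyBar t.p) (polyBar t.q) P) = n ∧
  GoodRedPoints S t.X

/-- Membership in `𝐺𝑅¹_d[n](K,S)`: as in `MemGRtilde`, and in addition `f` has simple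
good reduction outside `S`. -/
def MemGR (S : Set (NFPlace K)) (d n : ℕ) (t : DynTriple K) : Prop :=
  MemGRtilde S d n t ∧ SimpleGoodRed S d t.p t.q

/-- Two triples are `PGL₂(R_S)`-equivalent:  `t' = φ⁻¹ ∘ t ∘ φ` for some `φ = M` with
`S`-integral entries and `S`-unit determinant. -/
def TripleEquiv (S : Set (NFPlace K)) (d : ℕ) (t t' : DynTriple K) : Prop :=
  ∃ M : Matrix (Fin 2) (Fin 2) K,
    (∀ i j, SInteger S (M i j)) ∧ SUnit S M.det ∧
    (∀ P, ProjLine.mobius (matBar M) (ProjLine.eval d (polyBar t'.p) (polyBar t'.q) P)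
        = ProjLine.eval d (polyBar t.p) (polyBar t.q) (ProjLine.mobius (matBar M) P)) ∧
    ProjLine.mobius (matBar M) '' t'.Y = t.Y ∧
    ProjLine.mobius (matBar M) '' t'.X = t.X

end

noncomputable section
open Polynomial

/-- Numerator `a·x(x-1)(x-2)⋯(x-d+1)` of the map `f_a` of Proposition 4.1. -/
def fNum (L : Type*) [Field L] (d : ℕ) (a : L) : L[X] :=
  C a * ∏ i ∈ Finset.range d, (X - C ((i : ℕ) : L))

/-- Denominator `(x+1)(x+2)⋯(x+d-1)` of the map `f_a` of Proposition 4.1. -/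
def fDen (L : Type*) [Field L] (d : ℕ) : L[X] :=
  ∏ i ∈ Finset.range (d - 1), (X + C ((i + 1 : ℕ) : L))

/-- The set `X = {0, ±1, ±2, …, ±(d-1)} ∪ {∞}` of `2d` points of Proposition 4.1. -/
def stdSet (L : Type*) [Field L] (d : ℕ) : Set (ProjLine L) :=
  insert (none : ProjLine L)
    ((fun m : ℤ => (some ((m : ℤ) : L) : ProjLine L)) '' Set.Icc (-(d : ℤ) + 1) ((d : ℤ) - 1))

end

noncomputable section
open Polynomial IsDedekindDomain NumberField

/-!
The map `f_a = a·x(x-1)⋯(x-d+1) / ((x+1)⋯(x+d-1))` has simple zeros at `0, …, d-1` and simple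
poles at `-1, …, -(d-1)` and at `∞` (the denominator has degree `d-1`), so it sends `X` onto
`{0, ∞}` and every point of `X` has ramification index `1`. Two distinct points of `X` differ by a
nonzero integer of absolute value at most `2d-2`, which divides `(2d-2)!` and is therefore a unit
at every place outside `S`; hence `X` has good reduction outside `S`. Finally, the resultant of
the numerator and the homogenized denominator is `a^d · ∏_{i<d, j<d-1} (i+j+1)`, a product of an
`S`-unit and integers between `1` and `2d-2`, so `f_a` itself has good reduction outside `S`.
-/

section Polynomial

variable {L : Type*} [Field L]

lemma rootMultiplicity_prod_X_sub_C_of_injOn {ι : Type*} {s : Finset ι} {g : ι → L}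
    (hg : Set.InjOn g s) {i : ι} (hi : i ∈ s) :
    rootMultiplicity (g i) (∏ j ∈ s, (X - C (g j))) = 1 := by
  have hrest : ¬ (∏ j ∈ s.erase i, (X - C (g j))).IsRoot (g i) := by
    simp only [IsRoot, eval_prod, eval_sub, eval_X, eval_C]
    refine Finset.prod_ne_zero_iff.2 fun j hj ↦ sub_ne_zero.2 fun h ↦ ?_
    exact (Finset.mem_erase.1 hj).1 (hg hi (Finset.mem_of_mem_erase hj) h).symm
  rw [← Finset.mul_prod_erase s _ hi, rootMultiplicity_mul
    (mul_ne_zero (X_sub_C_ne_zero _) (monic_prod_X_sub_C _ _).ne_zero),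
    rootMultiplicity_X_sub_C_self, rootMultiplicity_eq_zero hrest]

lemma rootMultiplicity_zero_eq_one {p : L[X]} (h0 : p.coeff 0 = 0) (h1 : p.coeff 1 ≠ 0) :
    rootMultiplicity 0 p = 1 := by
  have hp : p ≠ 0 := fun h ↦ h1 (by rw [h, coeff_zero])
  have hle := natTrailingDegree_le_of_ne_zero h1
  have hne : p.natTrailingDegree ≠ 0 := by simp [hp, h0]
  rw [rootMultiplicity_eq_natTrailingDegree']
  omega

namespace ProjLine

lemma ramAt_of_eval_eq_zero {p q : L[X]} {x : L} (hq : q.eval x ≠ 0) (hp : p.eval x = 0) :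
    ramAt p q x = rootMultiplicity x p := by
  rw [ramAt, if_neg hq, hp, map_zero, zero_mul, sub_zero, ← count_roots, roots_C_mul _ hq,
    count_roots]

/-- Up to reversing the order of rows and of columns, `ProjLine.sylvester d e p q` is the
transpose of Mathlib's `Polynomial.sylvester p q d e`. -/
theorem resultant_eq_resultant (d e : ℕ) (p q : L[X]) :
    resultant d e p q = Polynomial.resultant p q d e := by
  let r : Fin (e + d) ≃ Fin (d + e) := (finCongr (add_comm e d)).trans Fin.revPerm
  rw [resultant, Polynomial.resultant,
    ← Matrix.det_transpose (Polynomial.sylvester p q d e), ← Matrix.det_submatrix_equiv_self r]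
  congr 1
  ext ⟨i, hi⟩ ⟨j, hj⟩
  simp only [sylvester, Polynomial.sylvester, Matrix.submatrix_apply, Matrix.transpose_apply,
    Matrix.of_apply, r, Equiv.trans_apply, finCongr_apply, Fin.revPerm_apply, Fin.addCases,
    Set.mem_Icc, Fin.val_rev, Fin.val_cast, Fin.val_castLT, Fin.val_subNat, eq_rec_constant]
  split_ifs <;> first | rfl | omega | (congr 1; omega)

lemma mobius_one (P : ProjLine L) : mobius 1 P = P := by
  cases P <;> simp [mobius]

lemma injOn_red_insert_none {O : ValuationSubring L} {s : Set L} (hs : s ⊆ O)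
    (hsub : ∀ x ∈ s, ∀ y ∈ s, x ≠ y → (x - y)⁻¹ ∈ O) :
    Set.InjOn (red O) (insert none (some '' s)) := by
  have hred : ∀ x (hx : x ∈ s), red O (some x) = some (IsLocalRing.residue O ⟨x, hs hx⟩) :=
    fun x hx ↦ dif_pos (hs hx)
  rintro _ (rfl | ⟨x, hx, rfl⟩) _ (rfl | ⟨y, hy, rfl⟩) h
  · rfl
  · rw [hred y hy] at h; cases h
  · rw [hred x hx] at h; cases h
  by_contra hxy
  have hne : x ≠ y := fun h ↦ hxy (congrArg some h)
  have hunit : IsUnit (⟨x, hs hx⟩ - ⟨y, hs hy⟩ : O) :=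
    IsUnit.of_mul_eq_one ⟨_, hsub x hx y hy hne⟩
      (Subtype.ext (mul_inv_cancel₀ (sub_ne_zero.2 hne)))
  rw [hred x hx, hred y hy, Option.some_inj, ← sub_eq_zero, ← map_sub] at h
  exact (IsLocalRing.residue_ne_zero_iff_isUnit _).2 hunit h

end ProjLine

end Polynomial

section RationalMap

variable {L : Type*} [Field L] {d : ℕ} {a : L}

lemma natDegree_prod_X_sub_natCast : (∏ i ∈ Finset.range d, (X - C (i : L))).natDegree = d := by
  rw [natDegree_prod_of_monic _ _ fun _ _ ↦ monic_X_sub_C _]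
  simp only [natDegree_X_sub_C, Finset.sum_const, Finset.card_range, smul_eq_mul, mul_one]

lemma coeff_fNum_self : (fNum L d a).coeff d = a := by
  have hlead := (monic_prod_X_sub_C (fun i : ℕ ↦ (i : L)) (Finset.range d)).coeff_natDegree
  rw [natDegree_prod_X_sub_natCast] at hlead
  rw [fNum, coeff_C_mul, hlead, mul_one]

lemma natDegree_fNum (ha : a ≠ 0) : (fNum L d a).natDegree = d := by
  rw [fNum, natDegree_C_mul ha, natDegree_prod_X_sub_natCast]

lemma monic_fDen : (fDen L d).Monic :=
  monic_prod_of_monic _ _ fun _ _ ↦ monic_X_add_C _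

lemma natDegree_fDen : (fDen L d).natDegree = d - 1 := by
  rw [fDen, natDegree_prod_of_monic _ _ fun _ _ ↦ monic_X_add_C _]
  simp only [natDegree_X_add_C, Finset.sum_const, Finset.card_range, smul_eq_mul, mul_one]

lemma fDen_eq_prod_X_sub_C :
    fDen L d = ∏ j ∈ Finset.range (d - 1), (X - C (-((j + 1 : ℕ) : L))) := by
  simp only [fDen, map_neg, sub_neg_eq_add]

lemma eval_fNum (x : L) : (fNum L d a).eval x = a * ∏ i ∈ Finset.range d, (x - i) := by
  simp [fNum, eval_prod]

lemma eval_fDen (x : L) :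
    (fDen L d).eval x = ∏ j ∈ Finset.range (d - 1), (x + (j + 1 : ℕ)) := by
  simp [fDen, eval_prod]

lemma map_fNum {L' : Type*} [Field L'] (f : L →+* L') : (fNum L d a).map f = fNum L' d (f a) := by
  simp [fNum, Polynomial.map_prod]

lemma map_fDen {L' : Type*} [Field L'] (f : L →+* L') : (fDen L d).map f = fDen L' d := by
  simp [fDen, Polynomial.map_prod]

lemma resultant_fNum_fDen (hd : 1 ≤ d) :
    resultant (fNum L d a) (fDen L d) d d =
      a ^ d *
        ∏ i ∈ Finset.range d, ∏ j ∈ Finset.range (d - 1), ((i + j + 1 : ℕ) : L) := by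
  obtain ⟨e, rfl⟩ : ∃ e, d = e + 1 := ⟨d - 1, by omega⟩
  have hden : (fDen L (e + 1)).natDegree ≤ e := by rw [natDegree_fDen]; omega
  have hprod := resultant_prod_left (Finset.range (e + 1)) (fun i : ℕ ↦ X - C (i : L))
    (fDen L (e + 1)) e
    (by simp only [leadingCoeff_X_sub_C, Finset.prod_const_one]; exact one_ne_zero) hden
  rw [natDegree_prod_X_sub_natCast] at hprod
  rw [resultant_add_right_deg _ _ _ _ 1 hden, coeff_fNum_self, fNum, resultant_C_mul_left, hprod]
  simp only [natDegree_X_sub_C, resultant_X_sub_C_left _ _ _ hden, eval_fDen]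
  simp only [Nat.add_sub_cancel, pow_succ, Nat.cast_add, Nat.cast_one, add_assoc]
  ring

lemma eval_fNum_natCast {k : ℕ} (hk : k < d) : (fNum L d a).eval (k : L) = 0 := by
  rw [eval_fNum]
  exact mul_eq_zero_of_right _ (Finset.prod_eq_zero (Finset.mem_range.2 hk) (sub_self _))

lemma eval_fDen_neg_succ {k : ℕ} (hk : k < d - 1) :
    (fDen L d).eval (-((k + 1 : ℕ) : L)) = 0 := by
  rw [eval_fDen]
  exact Finset.prod_eq_zero (Finset.mem_range.2 hk) (neg_add_cancel _)

lemma coeff_reflect_fDen_zero (hd : 1 ≤ d) : ((fDen L d).reflect d).coeff 0 = 0 := by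
  rw [coeff_reflect, revAt_le (Nat.zero_le d), Nat.sub_zero]
  exact coeff_eq_zero_of_natDegree_lt (by rw [natDegree_fDen]; omega)

lemma eval_fa_neg_succ {k : ℕ} (hk : k < d - 1) :
    ProjLine.eval d (fNum L d a) (fDen L d) (some (-((k + 1 : ℕ) : L))) = none := by
  rw [ProjLine.eval, ProjLine.evalAt, if_pos (eval_fDen_neg_succ hk)]

lemma eval_fa_none (hd : 1 ≤ d) : ProjLine.eval d (fNum L d a) (fDen L d) none = none := by
  rw [ProjLine.eval, ProjLine.evalAt, ← coeff_zero_eq_eval_zero,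
    if_pos (coeff_reflect_fDen_zero hd)]

lemma ram_fa_none (hd : 1 ≤ d) : ProjLine.ram d (fNum L d a) (fDen L d) none = 1 := by
  rw [ProjLine.ram, ProjLine.ramAt, ← coeff_zero_eq_eval_zero,
    if_pos (coeff_reflect_fDen_zero hd)]
  refine rootMultiplicity_zero_eq_one (coeff_reflect_fDen_zero hd) ?_
  rw [coeff_reflect, revAt_le (by omega), ← natDegree_fDen (L := L) (d := d),
    monic_fDen.coeff_natDegree]
  exact one_ne_zero

variable [CharZero L]

lemma isCoprime_fNum_fDen (ha : a ≠ 0) : IsCoprime (fNum L d a) (fDen L d) := by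
  refine IsCoprime.mul_left (isCoprime_one_left.of_isCoprime_of_dvd_left ?_) ?_
  · exact (isUnit_C.2 (isUnit_iff_ne_zero.2 ha)).dvd
  rw [fDen_eq_prod_X_sub_C]
  refine IsCoprime.prod_left fun i _ ↦ IsCoprime.prod_right fun j _ ↦ ?_
  refine isCoprime_X_sub_C_of_isUnit_sub (isUnit_iff_ne_zero.2 ?_)
  rw [sub_neg_eq_add, ← Nat.cast_add]
  exact Nat.cast_ne_zero.2 (by omega)

lemma isRatMapOfDeg_fNum_fDen (ha : a ≠ 0) : IsRatMapOfDeg d (fNum L d a) (fDen L d) :=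
  ⟨isCoprime_fNum_fDen ha, (natDegree_fNum ha).le, natDegree_fDen.trans_le (Nat.sub_le d 1),
    Or.inl (natDegree_fNum ha)⟩

lemma eval_fDen_natCast_ne_zero (k : ℕ) : (fDen L d).eval (k : L) ≠ 0 := by
  rw [eval_fDen]
  refine Finset.prod_ne_zero_iff.2 fun j _ ↦ ?_
  rw [← Nat.cast_add]
  exact Nat.cast_ne_zero.2 (by omega)

lemma eval_fa_natCast {k : ℕ} (hk : k < d) :
    ProjLine.eval d (fNum L d a) (fDen L d) (some (k : L)) = some 0 := by
  rw [ProjLine.eval, ProjLine.evalAt, if_neg (eval_fDen_natCast_ne_zero k), eval_fNum_natCast hk,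
    zero_div]

lemma ram_fa_natCast (ha : a ≠ 0) {k : ℕ} (hk : k < d) :
    ProjLine.ram d (fNum L d a) (fDen L d) (some (k : L)) = 1 := by
  rw [ProjLine.ram,
    ProjLine.ramAt_of_eval_eq_zero (eval_fDen_natCast_ne_zero k) (eval_fNum_natCast hk),
    ← count_roots, fNum, roots_C_mul _ ha, count_roots]
  exact rootMultiplicity_prod_X_sub_C_of_injOn Nat.cast_injective.injOn (Finset.mem_range.2 hk)

lemma ram_fa_neg_succ {k : ℕ} (hk : k < d - 1) :
    ProjLine.ram d (fNum L d a) (fDen L d) (some (-((k + 1 : ℕ) : L))) = 1 := by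
  rw [ProjLine.ram, ProjLine.ramAt, if_pos (eval_fDen_neg_succ hk), fDen_eq_prod_X_sub_C]
  refine rootMultiplicity_prod_X_sub_C_of_injOn (g := fun j : ℕ ↦ -((j + 1 : ℕ) : L))
    (fun i _ j _ h ↦ ?_) (Finset.mem_range.2 hk)
  simpa using h

end RationalMap

section StdSet

variable {L : Type*} [Field L] {d : ℕ}

lemma mem_stdSet_cases {P : ProjLine L} (hP : P ∈ stdSet L d) :
    P = none ∨ (∃ k < d, P = some (k : L)) ∨
      ∃ k < d - 1, P = some (-((k + 1 : ℕ) : L)) := by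
  rcases hP with rfl | ⟨m, ⟨hm₁, hm₂⟩, rfl⟩
  · exact Or.inl rfl
  right
  rcases le_or_gt 0 m with hm | hm
  · exact Or.inl ⟨m.toNat, by omega, by rw [← Int.cast_natCast, Int.toNat_of_nonneg hm]⟩
  · refine Or.inr ⟨(-m).toNat - 1, by omega, ?_⟩
    rw [← Int.cast_natCast, ← Int.cast_neg]
    congr 2
    omega

lemma stdSet_finite : (stdSet L d).Finite :=
  ((Set.finite_Icc _ _).image _).insert none

lemma galInvariant_stdSet {K : Type*} [Field K] [Algebra K L] :
    GalInvariant (K := K) (stdSet L d) := by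
  rintro σ _ (rfl | ⟨m, hm, rfl⟩)
  · exact Or.inl rfl
  · exact Or.inr ⟨m, hm, by simp⟩

variable [CharZero L] {a : L}

lemma ncard_stdSet (hd : 1 ≤ d) : (stdSet L d).ncard = 2 * d := by
  have hinj : Function.Injective fun m : ℤ ↦ (some (m : L) : ProjLine L) :=
    (Option.some_injective L).comp Int.cast_injective
  rw [stdSet, Set.ncard_insert_of_notMem (by simp) ((Set.finite_Icc _ _).image _),
    Set.ncard_image_of_injective _ hinj, ← Finset.coe_Icc, Set.ncard_coe_finset, Int.card_Icc]
  omega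

lemma image_eval_fa_stdSet (hd : 1 ≤ d) :
    ProjLine.eval d (fNum L d a) (fDen L d) '' stdSet L d = {some 0, none} := by
  refine Set.Subset.antisymm ?_ ?_
  · rintro _ ⟨P, hP, rfl⟩
    rcases mem_stdSet_cases hP with rfl | ⟨k, hk, rfl⟩ | ⟨k, hk, rfl⟩
    · exact Or.inr (eval_fa_none hd)
    · exact Or.inl (eval_fa_natCast hk)
    · exact Or.inr (eval_fa_neg_succ hk)
  · rintro _ (rfl | rfl)
    · refine ⟨some ((0 : ℤ) : L), Or.inr ⟨0, ⟨by omega, by omega⟩, rfl⟩, ?_⟩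
      simpa using eval_fa_natCast (L := L) (a := a) hd
    · exact ⟨none, Or.inl rfl, eval_fa_none hd⟩

lemma stdSet_eq_union_image_eval_fa (hd : 1 ≤ d) :
    stdSet L d = stdSet L d ∪ ProjLine.eval d (fNum L d a) (fDen L d) '' stdSet L d := by
  refine (Set.union_eq_self_of_subset_right ?_).symm
  rw [image_eval_fa_stdSet hd]
  rintro _ (rfl | rfl)
  · exact Or.inr ⟨0, ⟨by omega, by omega⟩, by simp⟩
  · exact Or.inl rfl

lemma finsum_ram_fa_stdSet (hd : 1 ≤ d) (ha : a ≠ 0) :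
    ∑ᶠ P ∈ stdSet L d, ProjLine.ram d (fNum L d a) (fDen L d) P = 2 * d := by
  rw [← ncard_stdSet (L := L) hd, ← finsum_one]
  refine finsum_mem_congr rfl fun P hP ↦ ?_
  rcases mem_stdSet_cases hP with rfl | ⟨k, hk, rfl⟩ | ⟨k, hk, rfl⟩
  · exact ram_fa_none hd
  · exact ram_fa_natCast ha hk
  · exact ram_fa_neg_succ hk

end StdSet

section SUnit

variable {K : Type*} [Field K] [NumberField K] {S : Set (NFPlace K)}

lemma SUnit.mul {x y : K} (hx : SUnit S x) (hy : SUnit S y) : SUnit S (x * y) :=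
  ⟨mul_ne_zero hx.1 hy.1, fun v hv ↦ by rw [map_mul, hx.2 v hv, hy.2 v hv, one_mul]⟩

lemma SUnit.pow {x : K} (hx : SUnit S x) (n : ℕ) : SUnit S (x ^ n) :=
  ⟨pow_ne_zero n hx.1, fun v hv ↦ by rw [map_pow, hx.2 v hv, one_pow]⟩

lemma SUnit.neg {x : K} (hx : SUnit S x) : SUnit S (-x) :=
  ⟨neg_ne_zero.2 hx.1, fun v hv ↦ by rw [Valuation.map_neg, hx.2 v hv]⟩

lemma SUnit.prod {ι : Type*} {s : Finset ι} {f : ι → K} (hf : ∀ i ∈ s, SUnit S (f i)) :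
    SUnit S (∏ i ∈ s, f i) :=
  ⟨Finset.prod_ne_zero_iff.2 fun i hi ↦ (hf i hi).1, fun v hv ↦ by
    rw [map_prod]; exact Finset.prod_eq_one fun i hi ↦ (hf i hi).2 v hv⟩

lemma SUnit.natCast_of_dvd {m n : ℕ} (hn : SUnit S (n : K)) (hmn : m ∣ n) :
    SUnit S (m : K) := by
  obtain ⟨k, rfl⟩ := hmn
  refine ⟨fun h ↦ hn.1 (by rw [Nat.cast_mul, h, zero_mul]), fun v hv ↦ ?_⟩
  have hm : v.valuation K m ≤ 1 := natCast_mem (S.integer K) m v hv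
  have hk : v.valuation K k ≤ 1 := natCast_mem (S.integer K) k v hv
  have hmk := hn.2 v hv
  rw [Nat.cast_mul, map_mul] at hmk
  exact le_antisymm hm (hmk ▸ mul_le_of_le_one_right' hk)

lemma SUnit.intCast_of_natAbs_dvd {k : ℤ} {n : ℕ} (hn : SUnit S (n : K)) (hk : k.natAbs ∣ n) :
    SUnit S (k : K) := by
  obtain ⟨m, rfl | rfl⟩ := Int.eq_nat_or_neg k
  · rw [Int.natAbs_natCast] at hk
    exact_mod_cast hn.natCast_of_dvd hk
  · rw [Int.natAbs_neg, Int.natAbs_natCast] at hk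
    rw [Int.cast_neg, Int.cast_natCast]
    exact (hn.natCast_of_dvd hk).neg

lemma sInteger_coeff_of_mem_liftsRing {p : K[X]}
    (hp : p ∈ liftsRing (algebraMap (S.integer K) K)) (n : ℕ) : SInteger S (p.coeff n) := by
  obtain ⟨r, hr⟩ := (lifts_iff_coeff_lifts p).1 ((lifts_iff_liftsRing _ p).2 hp) n
  exact hr ▸ r.2

lemma sInteger_coeff_fNum {d : ℕ} {a : K} (ha : SInteger S a) (n : ℕ) :
    SInteger S ((fNum K d a).coeff n) := by
  refine sInteger_coeff_of_mem_liftsRing (mul_mem ?_ (prod_mem fun i _ ↦ sub_mem ?_ ?_)) n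
  · exact (lifts_iff_liftsRing _ _).1 (C'_mem_lifts ⟨⟨a, ha⟩, rfl⟩)
  · exact (lifts_iff_liftsRing _ _).1 (X_mem_lifts _)
  · rw [map_natCast]; exact natCast_mem _ i

lemma sInteger_coeff_fDen {d : ℕ} (n : ℕ) : SInteger S ((fDen K d).coeff n) := by
  refine sInteger_coeff_of_mem_liftsRing (prod_mem fun j _ ↦ add_mem ?_ ?_) n
  · exact (lifts_iff_liftsRing _ _).1 (X_mem_lifts _)
  · rw [map_natCast]; exact natCast_mem _ _

end SUnit

section GoodReduction

variable {K : Type*} [Field K] [NumberField K] {S : Set (NFPlace K)} {d : ℕ}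

lemma goodRedPoints_stdSet {Kb : Type*} [Field Kb] [Algebra K Kb]
    (hfact : SUnit S ((2 * d - 2).factorial : K)) : GoodRedPoints S (stdSet Kb d) := by
  intro v hv O hO
  have hint : ∀ k : ℤ, (k : Kb) ∈ O := fun k ↦ by
    rw [← map_intCast (algebraMap K Kb)]
    exact (hO k).2 (intCast_mem (S.integer K) k v hv)
  have hstd : stdSet Kb d =
      insert none (some '' ((Int.cast : ℤ → Kb) '' Set.Icc (-(d : ℤ) + 1) (d - 1))) := by
    rw [Set.image_image]; rfl
  rw [hstd]
  refine ProjLine.injOn_red_insert_none (by rintro _ ⟨k, _, rfl⟩; exact hint k) ?_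
  rintro _ ⟨m, ⟨hm₁, hm₂⟩, rfl⟩ _ ⟨n, ⟨hn₁, hn₂⟩, rfl⟩ hmn
  have hne : m ≠ n := fun h ↦ hmn (congrArg _ h)
  have hunit : SUnit S ((m - n : ℤ) : K) :=
    hfact.intCast_of_natAbs_dvd (Nat.dvd_factorial (by omega) (by omega))
  simpa using (hO ((m - n : ℤ) : K)⁻¹).2 (by rw [map_inv₀, hunit.2 v hv, inv_one])

lemma sUnit_resultant_fNum_fDen (hd : 1 ≤ d) (hfact : SUnit S ((2 * d - 2).factorial : K))
    {a : K} (ha : SUnit S a) : SUnit S (ProjLine.resultant d d (fNum K d a) (fDen K d)) := by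
  rw [ProjLine.resultant_eq_resultant, resultant_fNum_fDen hd]
  refine (ha.pow d).mul (SUnit.prod fun i hi ↦ SUnit.prod fun j hj ↦ ?_)
  rw [Finset.mem_range] at hi hj
  exact hfact.natCast_of_dvd (Nat.dvd_factorial (by omega) (by omega))

lemma simpleGoodRed_fNum_fDen (hd : 1 ≤ d) (hfact : SUnit S ((2 * d - 2).factorial : K))
    {a : K} (ha : SUnit S a) : SimpleGoodRed S d (fNum K d a) (fDen K d) :=
  ⟨1, fNum K d a, fDen K d, by simp, isRatMapOfDeg_fNum_fDen ha.1,
    sInteger_coeff_fNum fun v hv ↦ (ha.2 v hv).le, sInteger_coeff_fDen,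
    sUnit_resultant_fNum_fDen hd hfact ha,
    fun P ↦ by rw [ProjLine.mobius_one, ProjLine.mobius_one]⟩

end GoodReduction

/-- **Proposition 4.1(a).**  Let `d ≥ 2` and let `S` be the set of primes of `K`
dividing `(2d-2)!`.  For every `S`-unit `a`, the triple `(f_a, X, X)` with
`f_a(x) = a·x(x-1)⋯(x-d+1)/((x+1)⋯(x+d-1))` and
`X = {0,1,…,d-1} ∪ {-1,…,-(d-1)} ∪ {∞}` belongs to `GR¹_d[2d](K,S)`;
moreover `f_a(X) = {0, ∞}`. -/
theorem fa_triple_in_GR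
    (K : Type*) [Field K] [NumberField K]
    (d : ℕ) (hd : 2 ≤ d)
    (S : Set (NFPlace K))
    (hS : S = {v : NFPlace K | v.valuation K ((Nat.factorial (2 * d - 2) : K)) ≠ 1})
    (a : K) (ha : SUnit S a) :
    MemGR S d (2 * d)
      ⟨fNum K d a, fDen K d,
        stdSet (AlgebraicClosure K) d, stdSet (AlgebraicClosure K) d⟩ ∧
    ProjLine.eval d (polyBar (fNum K d a)) (polyBar (fDen K d)) '' stdSet (AlgebraicClosure K) d
      = {some (0 : AlgebraicClosure K), none} := by
  have hd₁ : 1 ≤ d := by omega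
  have hfact : SUnit S ((2 * d - 2).factorial : K) :=
    ⟨Nat.cast_ne_zero.2 (Nat.factorial_ne_zero _), fun v hv ↦ by simpa [hS] using hv⟩
  have ha' : algebraMap K (AlgebraicClosure K) a ≠ 0 := (_root_.map_ne_zero _).2 ha.1
  simp only [MemGR, MemGRtilde, polyBar, map_fNum, map_fDen]
  exact ⟨⟨⟨isRatMapOfDeg_fNum_fDen ha.1, stdSet_finite, stdSet_eq_union_image_eval_fa hd₁,
    galInvariant_stdSet, finsum_ram_fa_stdSet hd₁ ha', goodRedPoints_stdSet hfact⟩,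
    simpleGoodRed_fNum_fDen hd₁ hfact ha⟩, image_eval_fa_stdSet hd₁⟩

end
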